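/- Let T : A(X,E) → A(Y,F) be a surjective linear map that preserves common zeros, where A(X,E) and A(Y,F) are almost normally multiplicative vector subspaces of C(X,E) and C(Y,F). If x ∈ X and y ∈ Z_x, then for every f ∈ A(X,E), setting u = f(x), the point y lies in the closure in βY of ι_Y({y' ∈ Y : (Tf)(y') = (T𝐮)(y')}); consequently (Tf)^β(y) = (T𝐮)^β(y). -/

import Mathlib

open Set Filter Topology

/-- The zero set of a function. -/
def zeroSet {α β : Type*} [Zero β] (f : α → β) : Set α := {x | f x = 0}

/-- A vector subspace `AX` of `C(X)` is almost normal if all its members are continuous and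
for every pair of subsets `P`, `Q` of `X` whose closures in the Stone–Čech compactification
`βX` are disjoint, there is `f ∈ AX` with `f = 0` on `P` and `f = 1` on `Q`. -/
def AlmostNormal (X : Type*) [TopologicalSpace X] (AX : Submodule ℝ (X → ℝ)) : Prop :=
  (∀ φ ∈ AX, Continuous φ) ∧
  ∀ P Q : Set X,
    Disjoint (closure (stoneCechUnit '' P)) (closure (stoneCechUnit '' Q)) →
      ∃ φ ∈ AX, (∀ x ∈ P, φ x = 0) ∧ (∀ x ∈ Q, φ x = 1)

/-- A vector subspace `AXE` of `C(X,E)` is almost normally multiplicative if all its members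
are continuous, it contains the constant functions, and there is an almost normal subspace
`AX` of `C(X)` such that `φ • f ∈ AXE` whenever `φ ∈ AX` and `f ∈ AXE`. -/
def AlmostNormallyMultiplicative (X E : Type*) [TopologicalSpace X] [TopologicalSpace E]
    [AddCommGroup E] [Module ℝ E] (AXE : Submodule ℝ (X → E)) : Prop :=
  (∀ f ∈ AXE, Continuous f) ∧
  (∀ u : E, (fun _ : X => u) ∈ AXE) ∧
  ∃ AX : Submodule ℝ (X → ℝ), AlmostNormal X AX ∧
    ∀ φ ∈ AX, ∀ f ∈ AXE, (fun x => φ x • f x) ∈ AXE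

/-- A map `T` between subspaces of `C(X,E)` and `C(Y,F)` preserves common zeros if for every
`k ∈ ℕ` and every finite family `f₁, …, f_k`, the zero sets of the `fᵢ` have a common point
iff the zero sets of the `T fᵢ` do. -/
def PreservesCommonZeros {X Y E F : Type*} [TopologicalSpace X] [TopologicalSpace Y]
    [AddCommGroup E] [Module ℝ E] [AddCommGroup F] [Module ℝ F]
    {AXE : Submodule ℝ (X → E)} {AYF : Submodule ℝ (Y → F)}
    (T : AXE → AYF) : Prop :=
  ∀ (k : ℕ) (f : Fin (k + 1) → AXE),
    (⋂ i, zeroSet ((f i : X → E))).Nonempty ↔ (⋂ i, zeroSet ((T (f i) : Y → F))).Nonempty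

/-- The set `Z_x ⊆ βY`: the intersection, over all `f` in the subspace vanishing at `x`, of the
closures in `βY` of the zero sets of `T f`. -/
def Zx {X Y E F : Type*} [TopologicalSpace X] [TopologicalSpace Y]
    [AddCommGroup E] [Module ℝ E] [AddCommGroup F] [Module ℝ F]
    {AXE : Submodule ℝ (X → E)} {AYF : Submodule ℝ (Y → F)}
    (T : AXE → AYF) (x : X) : Set (StoneCech Y) :=
  ⋂ (f : AXE) (_ : (f : X → E) x = 0), closure (stoneCechUnit '' zeroSet ((T f : Y → F)))


/-- The unique continuous extension `g^β : βY → βF` of a continuous map `g : Y → F`. -/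
noncomputable def betaExt {Y F : Type*} [TopologicalSpace Y] [TopologicalSpace F]
    {g : Y → F} (hg : Continuous g) : StoneCech Y → StoneCech F :=
  stoneCechExtend (continuous_stoneCechUnit.comp hg)

theorem zeroSet_sub {α β : Type*} [AddGroup β] (f g : α → β) :
    zeroSet (f - g) = {a | f a = g a} := by
  ext a
  simp [zeroSet, sub_eq_zero]

theorem mem_closure_eqLocus_of_mem_Zx {X Y E F : Type*}
    [TopologicalSpace X] [TopologicalSpace Y]
    [AddCommGroup E] [Module ℝ E] [AddCommGroup F] [Module ℝ F]
    {AXE : Submodule ℝ (X → E)} {AYF : Submodule ℝ (Y → F)} (T : AXE →ₗ[ℝ] AYF)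
    {x : X} {y : StoneCech Y} (hy : y ∈ Zx (T : AXE → AYF) x) {f g : AXE}
    (hfg : (f : X → E) x = (g : X → E) x) :
    y ∈ closure (stoneCechUnit '' {y' : Y | (T f : Y → F) y' = (T g : Y → F) y'}) := by
  have hsub : ((f - g : AXE) : X → E) x = 0 := by simp [hfg]
  simpa [map_sub, zeroSet_sub] using mem_iInter₂.1 hy (f - g) hsub

theorem stoneCechExtend_eq_of_mem_closure {α β : Type*} [TopologicalSpace α]
    [TopologicalSpace β] [T2Space β] [CompactSpace β] {g h : α → β}
    (hg : Continuous g) (hh : Continuous h) {y : StoneCech α}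
    (hy : y ∈ closure (stoneCechUnit '' {a | g a = h a})) :
    stoneCechExtend hg y = stoneCechExtend hh y := by
  have hEq : EqOn (stoneCechExtend hg) (stoneCechExtend hh)
      (stoneCechUnit '' {a | g a = h a}) := by
    rintro _ ⟨a, ha, rfl⟩
    rw [stoneCechExtend_stoneCechUnit, stoneCechExtend_stoneCechUnit]
    exact ha
  exact hEq.closure (continuous_stoneCechExtend hg) (continuous_stoneCechExtend hh) hy

theorem betaExt_eq_of_mem_closure {Y F : Type*} [TopologicalSpace Y] [TopologicalSpace F]
    {g h : Y → F} (hg : Continuous g) (hh : Continuous h) {y : StoneCech Y}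
    (hy : y ∈ closure (stoneCechUnit '' {y' | g y' = h y'})) :
    betaExt hg y = betaExt hh y :=
  stoneCechExtend_eq_of_mem_closure _ _ <|
    closure_mono (image_mono fun _ (hy' : g _ = h _) => congrArg stoneCechUnit hy') hy

theorem formula_on_Zx {X Y E F : Type*}
    [TopologicalSpace X]
    [TopologicalSpace Y]
    [AddCommGroup E] [Module ℝ E] [TopologicalSpace E]
    [AddCommGroup F] [Module ℝ F] [TopologicalSpace F]
    {AXE : Submodule ℝ (X → E)} {AYF : Submodule ℝ (Y → F)}
    (hAXE : AlmostNormallyMultiplicative X E AXE)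
    (hAYF : AlmostNormallyMultiplicative Y F AYF)
    (T : AXE →ₗ[ℝ] AYF)
    (x : X) (y : StoneCech Y) (hy : y ∈ Zx (T : AXE → AYF) x) (f : AXE) :
    y ∈ closure (stoneCechUnit ''
        {y' : Y | (T f : Y → F) y' =
          (T ⟨fun _ => (f : X → E) x, hAXE.2.1 _⟩ : Y → F) y'}) ∧
    betaExt (hAYF.1 _ (T f).2) y =
      betaExt (hAYF.1 _ (T ⟨fun _ => (f : X → E) x, hAXE.2.1 _⟩).2) y := by
  have hy' := mem_closure_eqLocus_of_mem_Zx T hy (f := f)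
    (g := ⟨fun _ => (f : X → E) x, hAXE.2.1 _⟩) rfl
  exact ⟨hy', betaExt_eq_of_mem_closure _ _ hy'⟩
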